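/- For d ≥ 2 there is no nontrivial multiplier bound: if φ = ∑_α c_α Z^α is a formal nc power series with c_{α₀} ≠ 0 for some word α₀ of positive length, and j₀ is a generator whose multiplicity a_{j₀} in α₀ is strictly less than |α₀|, then sup_{k∈ℕ} (|c_{α₀}|² · weight(α₀·j₀^k)) = ∞, where weight(β) = |β|!/β!. Concretely: |c_{α₀}|² · (k+|α₀|)!/(a₁!⋯(k+a_{j₀})!⋯a_d!) → ∞ as k → ∞. -/
import Mathlib


/-- The weight `|β|!/β!` of a word `β` in the free monoid on `d` generators. -/
noncomputable def ncWeight {d : ℕ} (β : List (Fin d)) : ℝ :=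
  (β.length.factorial : ℝ) / ∏ j : Fin d, ((β.count j).factorial : ℝ)

/-- If `c₀ ≠ 0`, `α₀` is a word of positive length, and `j₀` a generator whose
multiplicity in `α₀` is strictly less than `|α₀|`, then
`‖c₀‖² · weight(α₀ · j₀^k) → ∞` as `k → ∞`. -/
theorem stmt6 {d : ℕ} (c₀ : ℂ) (hc : c₀ ≠ 0) (α₀ : List (Fin d)) (h1 : 1 ≤ α₀.length)
    (j₀ : Fin d) (h2 : α₀.count j₀ < α₀.length) :
    Filter.Tendsto (fun k : ℕ => ‖c₀‖ ^ 2 * ncWeight (α₀ ++ List.replicate k j₀))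
      Filter.atTop Filter.atTop := by
  set L := α₀.length with hL
  set a := α₀.count j₀ with ha
  set Q : ℝ := ∏ j ∈ Finset.univ.erase j₀, ((α₀.count j).factorial : ℝ) with hQdef
  have hQpos : 0 < Q := by
    apply Finset.prod_pos
    intro j _
    exact_mod_cast Nat.factorial_pos _
  have hnorm : 0 < ‖c₀‖ ^ 2 := pow_pos (norm_pos_iff.mpr hc) 2
  -- key lower bound
  have key : ∀ k : ℕ,
      ‖c₀‖ ^ 2 * (((a : ℝ) + k + 1) / Q) ≤
        ‖c₀‖ ^ 2 * ncWeight (α₀ ++ List.replicate k j₀) := by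
    intro k
    have hlen : (α₀ ++ List.replicate k j₀).length = L + k := by
      simp [hL]
    have hcount0 : (α₀ ++ List.replicate k j₀).count j₀ = a + k := by
      simp [ha, List.count_append, List.count_replicate]
    have hcount : ∀ j : Fin d, j ≠ j₀ →
        (α₀ ++ List.replicate k j₀).count j = α₀.count j := by
      intro j hj
      simp [List.count_append, List.count_replicate, Ne.symm hj]
    have hprod : ∏ j : Fin d, (((α₀ ++ List.replicate k j₀).count j).factorial : ℝ)
        = ((a + k).factorial : ℝ) * Q := by
      rw [← Finset.mul_prod_erase Finset.univ _ (Finset.mem_univ j₀), hcount0, hQdef]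
      congr 1
      apply Finset.prod_congr rfl
      intro j hj
      rw [hcount j (Finset.ne_of_mem_erase hj)]
    have hw : ncWeight (α₀ ++ List.replicate k j₀)
        = ((L + k).factorial : ℝ) / (((a + k).factorial : ℝ) * Q) := by
      rw [ncWeight, hlen, hprod]
    rw [hw]
    gcongr ‖c₀‖ ^ 2 * ?_
    have hfac : ((a + k + 1) * (a + k).factorial : ℕ) ≤ (L + k).factorial := by
      rw [← Nat.factorial_succ]
      exact Nat.factorial_le (by omega)
    have hfacR : ((a : ℝ) + k + 1) * ((a + k).factorial : ℝ) ≤ ((L + k).factorial : ℝ) := by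
      exact_mod_cast hfac
    have hpos : (0 : ℝ) < ((a + k).factorial : ℝ) * Q := by
      have : (0 : ℝ) < ((a + k).factorial : ℝ) := by exact_mod_cast Nat.factorial_pos _
      positivity
    rw [div_le_div_iff₀ hQpos hpos]
    calc ((a : ℝ) + k + 1) * (((a + k).factorial : ℝ) * Q)
        = (((a : ℝ) + k + 1) * ((a + k).factorial : ℝ)) * Q := by ring
      _ ≤ ((L + k).factorial : ℝ) * Q := by
          apply mul_le_mul_of_nonneg_right hfacR hQpos.le
  apply Filter.tendsto_atTop_mono key
  have h3 : Filter.Tendsto (fun k : ℕ => ((a : ℝ) + k + 1)) Filter.atTop Filter.atTop := by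
    apply Filter.tendsto_atTop_add_const_right
    apply Filter.tendsto_atTop_add_const_left
    exact tendsto_natCast_atTop_atTop
  have h4 : Filter.Tendsto (fun k : ℕ => ((a : ℝ) + k + 1) * (‖c₀‖ ^ 2 / Q))
      Filter.atTop Filter.atTop :=
    h3.atTop_mul_const (by positivity)
  convert h4 using 2 with k
  ring
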